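/- arXiv:0710.0194 — 5 statements merged into one kernel-verified Lean document; each statement's English description precedes it below -/
import Mathlib

section
/- The family of operators {e_1^{γ_1} ∘ ⋯ ∘ e_n^{γ_n} ∘ ω_l : γ = (γ_1,…,γ_n) ∈ ℕ^n, l ∈ ℤ^n} is a basis of D as a ℂ-vector space. Equivalently, D is the direct sum over l ∈ ℤ^n of the subspaces M_l, where M_l is spanned by {e^γ ∘ ω_l : γ ∈ ℕ^n}, and each M_l is a free module of rank one over the polynomial algebra E = ℂ[e_1,…,e_n] with generator ω_l. -/
/-!
Every operator in sight sends a monomial to a multiple of a monomial: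
`ω_l x^a = (∏_j a_j (a_j - 1) ⋯ (a_j + l_j + 1)) x^{(a + l)⁺}` (the falling factorial of
length `l_j⁻`) and `e^γ x^b = b^γ x^b`.

Spanning: the span of the `e^γ ω_l` contains `1` and is stable under left multiplication by
each `e_j`. The relations `X_j e_j = (e_j - 1) X_j` and `∂_j e_j = (e_j + 1) ∂_j` reduce
stability under `X_j` and `∂_j` to the case `γ_j = 0`, where `X_j e^γ ω_l` and `∂_j e^γ ω_l`
are computed on monomials. Hence the span is all of `D`.

Independence: apply a vanishing combination `∑ g_{γ,l} e^γ ω_l` to `x^a` with `a + l₀ ≥ 0`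
and read off the coefficient of `x^{a + l₀}`. Only the terms with `l = l₀` contribute, so the
polynomial `∑_γ g_{γ,l₀} y^γ` vanishes on the translate `l₀⁺ + ℕ^n` of the lattice, hence is
zero.
-/

open MvPolynomial

noncomputable section

/-- The polynomial ring `P = ℂ[x_1, …, x_n]`. -/
abbrev Pn (n : ℕ) := MvPolynomial (Fin n) ℂ

/-- Multiplication by the variable `x_j`, as a ℂ-linear endomorphism of `P`. -/
def Xop (n : ℕ) (j : Fin n) : Module.End ℂ (Pn n) :=
  LinearMap.mulLeft ℂ (X j)

/-- The partial derivative `∂_j`, as a ℂ-linear endomorphism of `P`. -/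
def Dop (n : ℕ) (j : Fin n) : Module.End ℂ (Pn n) :=
  (pderiv j).toLinearMap

/-- The Weyl algebra `D`: the ℂ-subalgebra of `End_ℂ(P)` generated by the `X_j` and `∂_j`. -/
def weylD (n : ℕ) : Subalgebra ℂ (Module.End ℂ (Pn n)) :=
  Algebra.adjoin ℂ (Set.range (Xop n) ∪ Set.range (Dop n))

/-- The Euler operator `e_j = X_j ∘ ∂_j`. -/
def eulOp (n : ℕ) (j : Fin n) : Module.End ℂ (Pn n) :=
  Xop n j * Dop n j

/-- The factor `v_j`: `X_j^{l_j}` if `l_j ≥ 0`, and `∂_j^{-l_j}` if `l_j < 0`. -/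
def vOp (n : ℕ) (l : Fin n → ℤ) (j : Fin n) : Module.End ℂ (Pn n) :=
  if 0 ≤ l j then Xop n j ^ (l j).toNat else Dop n j ^ (-(l j)).toNat

/-- The operator `ω_l = v_1 ∘ ⋯ ∘ v_n` attached to a lattice point `l ∈ ℤ^n`. -/
def omegaOp (n : ℕ) (l : Fin n → ℤ) : Module.End ℂ (Pn n) :=
  (List.ofFn (vOp n l)).prod

/-- The operator `e^γ = e_1^{γ_1} ∘ ⋯ ∘ e_n^{γ_n}` for a multi-index `γ ∈ ℕ^n`. -/
def eulPow (n : ℕ) (γ : Fin n → ℕ) : Module.End ℂ (Pn n) :=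
  (List.ofFn fun j => eulOp n j ^ γ j).prod

lemma MvPolynomial.linearMap_ext_monomial {σ R M : Type*} [CommSemiring R] [AddCommMonoid M]
    [Module R M] {f g : MvPolynomial σ R →ₗ[R] M}
    (h : ∀ a, f (monomial a 1) = g (monomial a 1)) : f = g :=
  linearMap_ext fun a => LinearMap.ext_ring (h a)

lemma MvPolynomial.monomial_eq_monomial {σ R : Type*} [CommSemiring R] {e e' : σ →₀ ℕ}
    {c c' : R} (hc : c = c') (he : c ≠ 0 → e = e') : monomial e c = monomial e' c' := by
  subst hc
  by_cases h : c = 0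
  · simp [h]
  · rw [he h]

lemma MvPolynomial.list_prod_map_apply_monomial {σ R : Type*} [Finite σ] [DecidableEq σ]
    [CommSemiring R] (T : σ → Module.End R (MvPolynomial σ R)) (τ : σ → ℕ → ℕ) (w : σ → ℕ → R)
    (hT : ∀ j d c, T j (monomial d c) = monomial (d.update j (τ j (d j))) (w j (d j) * c))
    {L : List σ} (hL : L.Nodup) (d : σ →₀ ℕ) (c : R) :
    (L.map T).prod (monomial d c)
      = monomial (Finsupp.equivFunOnFinite.symm fun i => if i ∈ L then τ i (d i) else d i)
          ((L.map fun j => w j (d j)).prod * c) := by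
  induction L with
  | nil => simp
  | cons j L ih =>
    obtain ⟨hj, hL⟩ := List.nodup_cons.mp hL
    rw [List.map_cons, List.prod_cons, Module.End.mul_apply, ih hL, hT]
    congr 1
    · congr 1
      ext i
      rcases eq_or_ne i j with rfl | hij
      · simp [hj]
      · simp [Finsupp.update_apply, hij]
    · simp [hj, mul_assoc]

lemma MvPolynomial.ofFn_prod_apply_monomial {n : ℕ} {R : Type*} [CommSemiring R]
    (T : Fin n → Module.End R (MvPolynomial (Fin n) R)) (τ : Fin n → ℕ → ℕ) (w : Fin n → ℕ → R)
    (hT : ∀ j d c, T j (monomial d c) = monomial (d.update j (τ j (d j))) (w j (d j) * c))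
    (d : Fin n →₀ ℕ) (c : R) :
    (List.ofFn T).prod (monomial d c)
      = monomial (Finsupp.equivFunOnFinite.symm fun i => τ i (d i)) ((∏ j, w j (d j)) * c) := by
  rw [List.ofFn_eq_map, list_prod_map_apply_monomial T τ w hT (List.nodup_finRange n),
    ← List.ofFn_eq_map, List.prod_ofFn]
  simp

lemma MvPolynomial.eq_zero_of_eval_natCast_add_eq_zero {σ R : Type*} [CommRing R] [IsDomain R]
    [CharZero R] (p : MvPolynomial σ R) (c : σ → ℕ)
    (h : ∀ t : σ → ℕ, eval (fun i => ((t i + c i : ℕ) : R)) p = 0) : p = 0 := by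
  refine funext_set (fun i => Set.range fun t : ℕ => ((t + c i : ℕ) : R))
    (fun i => Set.infinite_range_of_injective (Nat.cast_injective.comp (add_left_injective _)))
    fun x hx => ?_
  choose t ht using fun i => hx i (Set.mem_univ i)
  rw [map_zero, ← h t]
  exact congrArg (eval · p) (_root_.funext ht).symm

section

variable {n : ℕ}

lemma Xop_monomial (j : Fin n) (d : Fin n →₀ ℕ) (c : ℂ) :
    Xop n j (monomial d c) = monomial (d + Finsupp.single j 1) c := by
  simp [Xop, X, monomial_mul, add_comm]

lemma Dop_monomial (j : Fin n) (d : Fin n →₀ ℕ) (c : ℂ) :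
    Dop n j (monomial d c) = monomial (d - Finsupp.single j 1) ((d j : ℂ) * c) := by
  simp [Dop, pderiv_monomial, mul_comm]

lemma Dop_mul_Xop (j : Fin n) : Dop n j * Xop n j = Xop n j * Dop n j + 1 := by
  refine LinearMap.ext fun p => ?_
  simp [Dop, Xop, Derivation.leibniz, add_comm]

lemma Xop_mul_eulOp (j : Fin n) : Xop n j * eulOp n j = eulOp n j * Xop n j - Xop n j := by
  rw [eulOp, mul_assoc (Xop n j) (Dop n j), Dop_mul_Xop]
  noncomm_ring

lemma Dop_mul_eulOp (j : Fin n) : Dop n j * eulOp n j = eulOp n j * Dop n j + Dop n j := by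
  rw [eulOp, ← mul_assoc, Dop_mul_Xop, add_mul, one_mul, mul_assoc]

lemma Xop_pow_monomial (j : Fin n) (k : ℕ) (d : Fin n →₀ ℕ) (c : ℂ) :
    (Xop n j ^ k) (monomial d c) = monomial (d + Finsupp.single j k) c := by
  induction k with
  | zero => simp
  | succ k ih =>
    rw [pow_succ', Module.End.mul_apply, ih, Xop_monomial, add_assoc, ← Finsupp.single_add]

lemma Dop_pow_monomial (j : Fin n) (k : ℕ) (d : Fin n →₀ ℕ) (c : ℂ) :
    (Dop n j ^ k) (monomial d c)
      = monomial (d - Finsupp.single j k) (((d j).descFactorial k : ℂ) * c) := by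
  induction k with
  | zero => simp
  | succ k ih =>
    rw [pow_succ', Module.End.mul_apply, ih, Dop_monomial, tsub_tsub, ← Finsupp.single_add]
    simp [Nat.descFactorial_succ, mul_assoc]

lemma eulOp_monomial (j : Fin n) (d : Fin n →₀ ℕ) (c : ℂ) :
    eulOp n j (monomial d c) = monomial d ((d j : ℂ) * c) := by
  rw [eulOp, Module.End.mul_apply, Dop_monomial, Xop_monomial]
  rcases Nat.eq_zero_or_pos (d j) with h | h
  · simp [h]
  · rw [tsub_add_cancel_of_le (Finsupp.single_le_iff.mpr h)]

lemma eulOp_pow_monomial (j : Fin n) (k : ℕ) (d : Fin n →₀ ℕ) (c : ℂ) :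
    (eulOp n j ^ k) (monomial d c) = monomial d ((d j : ℂ) ^ k * c) := by
  induction k with
  | zero => simp
  | succ k ih => rw [pow_succ', Module.End.mul_apply, ih, eulOp_monomial, pow_succ', mul_assoc]

lemma vOp_monomial (l : Fin n → ℤ) (j : Fin n) (d : Fin n →₀ ℕ) (c : ℂ) :
    vOp n l j (monomial d c)
      = monomial (d.update j (d j + l j).toNat) (((d j).descFactorial (-l j).toNat : ℂ) * c) := by
  unfold vOp
  split_ifs with h
  · rw [Xop_pow_monomial, show (-l j).toNat = 0 by omega]
    congr 2
    · ext i
      rcases eq_or_ne i j with rfl | hij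
      · simp only [Finsupp.coe_add, Pi.add_apply, Finsupp.single_eq_same, Finsupp.update_apply,
          if_true]
        omega
      · simp [Finsupp.update_apply, hij]
    · simp
  · rw [Dop_pow_monomial]
    congr 2
    ext i
    rcases eq_or_ne i j with rfl | hij
    · simp only [Finsupp.coe_tsub, Pi.sub_apply, Finsupp.single_eq_same, Finsupp.update_apply,
        if_true]
      omega
    · simp [Finsupp.update_apply, hij]

/-- The exponent `(a + l)⁺` of `ω_l x^a`. -/
def shiftExp (a : Fin n →₀ ℕ) (l : Fin n → ℤ) : Fin n →₀ ℕ :=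
  Finsupp.equivFunOnFinite.symm fun j => (a j + l j).toNat

@[simp] lemma shiftExp_apply (a : Fin n →₀ ℕ) (l : Fin n → ℤ) (j : Fin n) :
    shiftExp a l j = (a j + l j).toNat := rfl

def omegaCoeff (l : Fin n → ℤ) (a : Fin n →₀ ℕ) : ℂ :=
  ∏ j, ((a j).descFactorial (-l j).toNat : ℂ)

lemma omegaOp_monomial (l : Fin n → ℤ) (a : Fin n →₀ ℕ) (c : ℂ) :
    omegaOp n l (monomial a c) = monomial (shiftExp a l) (omegaCoeff l a * c) :=
  ofFn_prod_apply_monomial _ (fun j t => (t + l j).toNat)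
    (fun j t => (t.descFactorial (-l j).toNat : ℂ)) (vOp_monomial l) a c

lemma eulPow_monomial (γ : Fin n → ℕ) (a : Fin n →₀ ℕ) (c : ℂ) :
    eulPow n γ (monomial a c) = monomial a ((∏ j, (a j : ℂ) ^ γ j) * c) := by
  rw [eulPow, ofFn_prod_apply_monomial _ (fun _ t => t) (fun j t => (t : ℂ) ^ γ j)
    (fun j d c => by rw [eulOp_pow_monomial, Finsupp.update_self])]
  simp

def eulOmega (γ : Fin n → ℕ) (l : Fin n → ℤ) : Module.End ℂ (Pn n) :=
  eulPow n γ * omegaOp n l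

/-- The factor contributed by the `j`-th coordinate `t = a_j` to `e^γ ω_l x^a`,
where `k = γ_j` and `m = l_j`. -/
def coordCoeff (k : ℕ) (m : ℤ) (t : ℕ) : ℂ :=
  ((t + m).toNat : ℂ) ^ k * t.descFactorial (-m).toNat

def monoCoeff (γ : Fin n → ℕ) (l : Fin n → ℤ) (a : Fin n →₀ ℕ) : ℂ :=
  ∏ j, coordCoeff (γ j) (l j) (a j)

lemma monoCoeff_eq_mul_omegaCoeff (γ : Fin n → ℕ) (l : Fin n → ℤ) (a : Fin n →₀ ℕ) :
    monoCoeff γ l a = (∏ j, (shiftExp a l j : ℂ) ^ γ j) * omegaCoeff l a :=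
  Finset.prod_mul_distrib

lemma eulOmega_monomial (γ : Fin n → ℕ) (l : Fin n → ℤ) (a : Fin n →₀ ℕ) (c : ℂ) :
    eulOmega γ l (monomial a c) = monomial (shiftExp a l) (monoCoeff γ l a * c) := by
  rw [eulOmega, Module.End.mul_apply, omegaOp_monomial, eulPow_monomial,
    monoCoeff_eq_mul_omegaCoeff, mul_assoc]

lemma omegaCoeff_ne_zero_iff {l : Fin n → ℤ} {a : Fin n →₀ ℕ} :
    omegaCoeff l a ≠ 0 ↔ ∀ j, 0 ≤ (a j : ℤ) + l j := by
  simp only [omegaCoeff, ne_eq, Finset.prod_eq_zero_iff, Finset.mem_univ, true_and, not_exists,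
    Nat.cast_eq_zero, Nat.descFactorial_eq_zero_iff_lt, not_lt]
  exact forall_congr' fun j => by omega

lemma nonneg_of_monoCoeff_ne_zero {γ : Fin n → ℕ} {l : Fin n → ℤ} {a : Fin n →₀ ℕ}
    (h : monoCoeff γ l a ≠ 0) (j : Fin n) : 0 ≤ (a j : ℤ) + l j := by
  rw [monoCoeff_eq_mul_omegaCoeff] at h
  exact omegaCoeff_ne_zero_iff.mp (right_ne_zero_of_mul h) j

end

section

variable {n : ℕ} {γ γ' : Fin n → ℕ} {l l' : Fin n → ℤ} {j : Fin n}

lemma monoCoeff_eq_mul_of_eq_of_ne (hγ : ∀ i ≠ j, γ' i = γ i) (hl : ∀ i ≠ j, l' i = l i)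
    {a : Fin n →₀ ℕ} {r : ℂ}
    (h : coordCoeff (γ' j) (l' j) (a j) = r * coordCoeff (γ j) (l j) (a j)) :
    monoCoeff γ' l' a = r * monoCoeff γ l a := by
  rw [monoCoeff, monoCoeff, ← Finset.mul_prod_erase _ _ (Finset.mem_univ j),
    ← Finset.mul_prod_erase _ _ (Finset.mem_univ j), h, mul_assoc]
  congr 2
  refine Finset.prod_congr rfl fun i hi => ?_
  rw [hγ i (Finset.ne_of_mem_erase hi), hl i (Finset.ne_of_mem_erase hi)]

lemma shiftExp_add_single {a : Fin n →₀ ℕ} (h : 0 ≤ (a j : ℤ) + l j) :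
    shiftExp a l + Finsupp.single j 1 = shiftExp a (Function.update l j (l j + 1)) := by
  ext i
  rcases eq_or_ne i j with rfl | hij
  · simp only [Finsupp.coe_add, Pi.add_apply, shiftExp_apply, Finsupp.single_eq_same,
      Function.update_self]
    omega
  · simp [hij]

lemma shiftExp_sub_single (a : Fin n →₀ ℕ) :
    shiftExp a l - Finsupp.single j 1 = shiftExp a (Function.update l j (l j - 1)) := by
  ext i
  rcases eq_or_ne i j with rfl | hij
  · simp only [Finsupp.coe_tsub, Pi.sub_apply, shiftExp_apply, Finsupp.single_eq_same,
      Function.update_self]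
    omega
  · simp [hij]

lemma eulOp_mul_eulOmega :
    eulOp n j * eulOmega γ l = eulOmega (Function.update γ j (γ j + 1)) l := by
  refine linearMap_ext_monomial fun a => ?_
  have hc : monoCoeff (Function.update γ j (γ j + 1)) l a = shiftExp a l j * monoCoeff γ l a :=
    monoCoeff_eq_mul_of_eq_of_ne (fun i hi => Function.update_of_ne hi _ _) (fun _ _ => rfl)
      (by rw [coordCoeff, coordCoeff, Function.update_self, pow_succ', shiftExp_apply, mul_assoc])
  rw [Module.End.mul_apply, eulOmega_monomial, eulOmega_monomial, eulOp_monomial, hc, mul_assoc]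

lemma Xop_mul_eulOmega_of_nonneg (hγ : γ j = 0) (hl : 0 ≤ l j) :
    Xop n j * eulOmega γ l = eulOmega γ (Function.update l j (l j + 1)) := by
  refine linearMap_ext_monomial fun a => ?_
  have hc : monoCoeff γ (Function.update l j (l j + 1)) a = 1 * monoCoeff γ l a :=
    monoCoeff_eq_mul_of_eq_of_ne (fun _ _ => rfl) (fun i hi => Function.update_of_ne hi _ _)
      (by rw [coordCoeff, coordCoeff, Function.update_self, hγ,
        show (-(l j + 1)).toNat = (-l j).toNat by omega, pow_zero, pow_zero, one_mul, one_mul])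
  rw [Module.End.mul_apply, eulOmega_monomial, eulOmega_monomial, Xop_monomial,
    shiftExp_add_single (by omega), hc, one_mul]

lemma Xop_mul_eulOmega_of_neg (hγ : γ j = 0) (hl : l j < 0) :
    Xop n j * eulOmega γ l
      = eulOmega (Function.update γ j 1) (Function.update l j (l j + 1)) := by
  refine linearMap_ext_monomial fun a => ?_
  have hc : monoCoeff (Function.update γ j 1) (Function.update l j (l j + 1)) a
      = 1 * monoCoeff γ l a := by
    refine monoCoeff_eq_mul_of_eq_of_ne (fun i hi => Function.update_of_ne hi _ _)
      (fun i hi => Function.update_of_ne hi _ _) ?_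
    simp only [coordCoeff, Function.update_self, hγ, pow_one, pow_zero, one_mul]
    rw [show (-l j).toNat = (-(l j + 1)).toNat + 1 by omega, Nat.descFactorial_succ,
      show (↑(a j) + (l j + 1)).toNat = a j - (-(l j + 1)).toNat by omega, Nat.cast_mul]
  rw [Module.End.mul_apply, eulOmega_monomial, eulOmega_monomial, Xop_monomial, hc, one_mul]
  -- when `a_j + l_j < 0` both sides vanish
  refine monomial_eq_monomial rfl fun h => shiftExp_add_single ?_
  exact nonneg_of_monoCoeff_ne_zero (by simpa using h) j

lemma Dop_mul_eulOmega_of_nonpos (hγ : γ j = 0) (hl : l j ≤ 0) :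
    Dop n j * eulOmega γ l = eulOmega γ (Function.update l j (l j - 1)) := by
  refine linearMap_ext_monomial fun a => ?_
  have hc : monoCoeff γ (Function.update l j (l j - 1)) a = shiftExp a l j * monoCoeff γ l a := by
    refine monoCoeff_eq_mul_of_eq_of_ne (fun _ _ => rfl)
      (fun i hi => Function.update_of_ne hi _ _) ?_
    simp only [coordCoeff, Function.update_self, hγ, pow_zero, one_mul, shiftExp_apply]
    rw [show (-(l j - 1)).toNat = (-l j).toNat + 1 by omega, Nat.descFactorial_succ,
      show (↑(a j) + l j).toNat = a j - (-l j).toNat by omega, Nat.cast_mul]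
  rw [Module.End.mul_apply, eulOmega_monomial, eulOmega_monomial, Dop_monomial,
    shiftExp_sub_single, hc, mul_one, mul_one]

lemma Dop_mul_eulOmega_of_pos (hγ : γ j = 0) (hl : 0 < l j) :
    Dop n j * eulOmega γ l = eulOmega (Function.update γ j 1) (Function.update l j (l j - 1))
      + eulOmega γ (Function.update l j (l j - 1)) := by
  refine linearMap_ext_monomial fun a => ?_
  have hdesc : (-l j).toNat = 0 ∧ (-(l j - 1)).toNat = 0 := by omega
  have hc₁ : monoCoeff (Function.update γ j 1) (Function.update l j (l j - 1)) a
      = (shiftExp a l j - 1) * monoCoeff γ l a := by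
    refine monoCoeff_eq_mul_of_eq_of_ne (fun i hi => Function.update_of_ne hi _ _)
      (fun i hi => Function.update_of_ne hi _ _) ?_
    simp only [coordCoeff, Function.update_self, hγ, pow_one, pow_zero, shiftExp_apply, hdesc]
    rw [show (↑(a j) + (l j - 1)).toNat = (↑(a j) + l j).toNat - 1 by omega,
      Nat.cast_sub (by omega)]
    simp
  have hc₂ : monoCoeff γ (Function.update l j (l j - 1)) a = 1 * monoCoeff γ l a :=
    monoCoeff_eq_mul_of_eq_of_ne (fun _ _ => rfl) (fun i hi => Function.update_of_ne hi _ _)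
      (by simp only [coordCoeff, Function.update_self, hγ, hdesc, pow_zero, one_mul])
  rw [Module.End.mul_apply, LinearMap.add_apply, eulOmega_monomial, eulOmega_monomial,
    eulOmega_monomial, Dop_monomial, shiftExp_sub_single, ← map_add, hc₁, hc₂]
  ring_nf

end

section

variable {n : ℕ}

def eulOmegaSpan (n : ℕ) : Submodule ℂ (Module.End ℂ (Pn n)) :=
  Submodule.span ℂ (Set.range fun p : (Fin n → ℕ) × (Fin n → ℤ) => eulOmega p.1 p.2)

lemma eulOmega_mem_eulOmegaSpan (γ : Fin n → ℕ) (l : Fin n → ℤ) :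
    eulOmega γ l ∈ eulOmegaSpan n :=
  Submodule.subset_span ⟨(γ, l), rfl⟩

lemma mul_mem_eulOmegaSpan {T u : Module.End ℂ (Pn n)}
    (hT : ∀ γ l, T * eulOmega γ l ∈ eulOmegaSpan n) (hu : u ∈ eulOmegaSpan n) :
    T * u ∈ eulOmegaSpan n :=
  (Submodule.span_le (p := (eulOmegaSpan n).comap (LinearMap.mulLeft ℂ T))).mpr
    (by rintro _ ⟨p, rfl⟩; exact hT p.1 p.2) hu

lemma eulOp_mul_mem_eulOmegaSpan (j : Fin n) {u : Module.End ℂ (Pn n)}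
    (hu : u ∈ eulOmegaSpan n) : eulOp n j * u ∈ eulOmegaSpan n :=
  mul_mem_eulOmegaSpan (fun _ _ => eulOp_mul_eulOmega ▸ eulOmega_mem_eulOmegaSpan _ _) hu

lemma mul_eulOmega_mem_of_mul_eulOp {T : Module.End ℂ (Pn n)} {j : Fin n} {c : ℂ}
    (hT : T * eulOp n j = eulOp n j * T + c • T)
    (hbase : ∀ γ l, γ j = 0 → T * eulOmega γ l ∈ eulOmegaSpan n) (γ : Fin n → ℕ)
    (l : Fin n → ℤ) : T * eulOmega γ l ∈ eulOmegaSpan n := by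
  suffices h : ∀ k, T * eulOmega (Function.update γ j k) l ∈ eulOmegaSpan n by
    simpa using h (γ j)
  intro k
  induction k with
  | zero => exact hbase _ _ (Function.update_self _ _ _)
  | succ k ih =>
    have hstep : eulOmega (Function.update γ j (k + 1)) l
        = eulOp n j * eulOmega (Function.update γ j k) l := by
      rw [eulOp_mul_eulOmega, Function.update_idem, Function.update_self]
    rw [hstep, ← mul_assoc, hT, add_mul, smul_mul_assoc, mul_assoc]
    exact add_mem (eulOp_mul_mem_eulOmegaSpan j ih) (Submodule.smul_mem _ _ ih)

lemma Xop_mul_mem_eulOmegaSpan (j : Fin n) {u : Module.End ℂ (Pn n)}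
    (hu : u ∈ eulOmegaSpan n) : Xop n j * u ∈ eulOmegaSpan n := by
  refine mul_mem_eulOmegaSpan
    (mul_eulOmega_mem_of_mul_eulOp (j := j) (c := -1) ?_ fun γ l hγ => ?_) hu
  · rw [Xop_mul_eulOp, sub_eq_add_neg, ← neg_one_smul ℂ (Xop n j)]
  · rcases le_or_gt 0 (l j) with hl | hl
    · rw [Xop_mul_eulOmega_of_nonneg hγ hl]
      exact eulOmega_mem_eulOmegaSpan _ _
    · rw [Xop_mul_eulOmega_of_neg hγ hl]
      exact eulOmega_mem_eulOmegaSpan _ _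

lemma Dop_mul_mem_eulOmegaSpan (j : Fin n) {u : Module.End ℂ (Pn n)}
    (hu : u ∈ eulOmegaSpan n) : Dop n j * u ∈ eulOmegaSpan n := by
  refine mul_mem_eulOmegaSpan
    (mul_eulOmega_mem_of_mul_eulOp (j := j) (c := 1) ?_ fun γ l hγ => ?_) hu
  · rw [Dop_mul_eulOp, one_smul]
  · rcases le_or_gt (l j) 0 with hl | hl
    · rw [Dop_mul_eulOmega_of_nonpos hγ hl]
      exact eulOmega_mem_eulOmegaSpan _ _
    · rw [Dop_mul_eulOmega_of_pos hγ hl]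
      exact add_mem (eulOmega_mem_eulOmegaSpan _ _) (eulOmega_mem_eulOmegaSpan _ _)

lemma eulOmega_zero : eulOmega (0 : Fin n → ℕ) 0 = 1 := by
  refine linearMap_ext_monomial fun a => ?_
  have hexp : shiftExp a 0 = a := by ext j; simp
  simp [eulOmega_monomial, hexp, monoCoeff, coordCoeff]

lemma weylD_le_eulOmegaSpan : Subalgebra.toSubmodule (weylD n) ≤ eulOmegaSpan n := by
  intro x hx
  have key : ∀ u ∈ eulOmegaSpan n, x * u ∈ eulOmegaSpan n := by
    induction hx using Algebra.adjoin_induction with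
    | mem y hy =>
      rcases hy with ⟨j, rfl⟩ | ⟨j, rfl⟩
      · exact fun u => Xop_mul_mem_eulOmegaSpan j
      · exact fun u => Dop_mul_mem_eulOmegaSpan j
    | algebraMap r =>
      intro u hu
      rw [Algebra.algebraMap_eq_smul_one, smul_mul_assoc, one_mul]
      exact Submodule.smul_mem _ _ hu
    | add y z _ _ hy hz => exact fun u hu => add_mul y z u ▸ add_mem (hy u hu) (hz u hu)
    | mul y z _ _ hy hz => exact fun u hu => (mul_assoc y z u).symm ▸ hy _ (hz u hu)
  simpa using key 1 (eulOmega_zero (n := n) ▸ eulOmega_mem_eulOmegaSpan 0 0)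

lemma eulOmega_mem_weylD (γ : Fin n → ℕ) (l : Fin n → ℤ) : eulOmega γ l ∈ weylD n := by
  have hX (j : Fin n) : Xop n j ∈ weylD n := Algebra.subset_adjoin (.inl ⟨j, rfl⟩)
  have hD (j : Fin n) : Dop n j ∈ weylD n := Algebra.subset_adjoin (.inr ⟨j, rfl⟩)
  refine mul_mem (list_prod_mem ?_) (list_prod_mem ?_) <;>
    simp only [List.mem_ofFn, forall_exists_index] <;> rintro _ j rfl
  · exact pow_mem (mul_mem (hX j) (hD j)) _
  · unfold vOp
    split_ifs
    exacts [pow_mem (hX j) _, pow_mem (hD j) _]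

theorem eulOmegaSpan_eq_weylD : eulOmegaSpan n = Subalgebra.toSubmodule (weylD n) := by
  refine le_antisymm ?_ weylD_le_eulOmegaSpan
  rw [eulOmegaSpan, Submodule.span_le]
  rintro _ ⟨p, rfl⟩
  exact eulOmega_mem_weylD p.1 p.2

lemma coeff_shiftExp_eulOmega_monomial {a : Fin n →₀ ℕ} {l₀ : Fin n → ℤ}
    (ha : ∀ j, 0 ≤ (a j : ℤ) + l₀ j) (γ : Fin n → ℕ) (l : Fin n → ℤ) :
    coeff (shiftExp a l₀) (eulOmega γ l (monomial a 1))
      = if l = l₀ then monoCoeff γ l₀ a else 0 := by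
  rw [eulOmega_monomial, coeff_monomial, mul_one]
  split_ifs with he hl hl
  · rw [hl]
  · by_contra h
    refine hl (funext fun j => ?_)
    have hj := DFunLike.congr_fun he j
    simp only [shiftExp_apply] at hj
    have := nonneg_of_monoCoeff_ne_zero h j
    have := ha j
    omega
  · exact absurd (by rw [hl]) he
  · rfl

lemma sum_mul_monoCoeff_eq_zero {s : Finset ((Fin n → ℕ) × (Fin n → ℤ))}
    {g : (Fin n → ℕ) × (Fin n → ℤ) → ℂ} (hg : ∑ p ∈ s, g p • eulOmega p.1 p.2 = 0)
    {a : Fin n →₀ ℕ} {l₀ : Fin n → ℤ} (ha : ∀ j, 0 ≤ (a j : ℤ) + l₀ j) :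
    ∑ p ∈ s with p.2 = l₀, g p * monoCoeff p.1 l₀ a = 0 := by
  have := congrArg (fun T => coeff (shiftExp a l₀) (T (monomial a 1))) hg
  simpa [coeff_sum, coeff_shiftExp_eulOmega_monomial ha, Finset.sum_filter, mul_ite] using this

theorem linearIndependent_eulOmega :
    LinearIndependent ℂ (fun p : (Fin n → ℕ) × (Fin n → ℤ) => eulOmega p.1 p.2) := by
  rw [linearIndependent_iff']
  rintro s g hg ⟨γ₀, l₀⟩ hp₀
  set Q : Pn n := ∑ p ∈ s with p.2 = l₀, monomial (Finsupp.equivFunOnFinite.symm p.1) (g p)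
  have hQ : Q = 0 := by
    refine eq_zero_of_eval_natCast_add_eq_zero Q (fun j => (l₀ j).toNat) fun t => ?_
    set a : Fin n →₀ ℕ := Finsupp.equivFunOnFinite.symm fun j => t j + (-l₀ j).toNat
    have ha (j : Fin n) : 0 ≤ (a j : ℤ) + l₀ j := by
      show 0 ≤ ((t j + (-l₀ j).toNat : ℕ) : ℤ) + l₀ j
      omega
    have hpt : (fun j => ((t j + (l₀ j).toNat : ℕ) : ℂ)) = fun j => (shiftExp a l₀ j : ℂ) := by
      funext j
      congr 1
      show t j + (l₀ j).toNat = (((t j + (-l₀ j).toNat : ℕ) : ℤ) + l₀ j).toNat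
      omega
    refine (mul_eq_zero.mp ?_).resolve_right (omegaCoeff_ne_zero_iff.mpr ha)
    rw [hpt, ← sum_mul_monoCoeff_eq_zero hg ha, map_sum, Finset.sum_mul]
    refine Finset.sum_congr rfl fun p _ => ?_
    rw [eval_monomial, Finsupp.prod_fintype _ _ (by simp), monoCoeff_eq_mul_omegaCoeff]
    simp [mul_assoc]
  have hcoeff : coeff (Finsupp.equivFunOnFinite.symm γ₀) Q = g (γ₀, l₀) := by
    rw [coeff_sum, Finset.sum_eq_single_of_mem (s := s.filter (·.2 = l₀)) (γ₀, l₀)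
      (Finset.mem_filter.mpr ⟨hp₀, rfl⟩)]
    · simp
    · rintro ⟨γ, l⟩ hp hne
      rw [coeff_monomial, if_neg]
      rintro h
      obtain rfl : l = l₀ := (Finset.mem_filter.mp hp).2
      exact hne (Prod.ext (Finsupp.equivFunOnFinite.symm.injective h) rfl)
  rw [← hcoeff, hQ, coeff_zero]

end

theorem stmt2_general (n : ℕ) :
    LinearIndependent ℂ
      (fun p : (Fin n → ℕ) × (Fin n → ℤ) => eulPow n p.1 * omegaOp n p.2) ∧
    Submodule.span ℂ
        (Set.range fun p : (Fin n → ℕ) × (Fin n → ℤ) => eulPow n p.1 * omegaOp n p.2)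
      = Subalgebra.toSubmodule (weylD n) :=
  ⟨linearIndependent_eulOmega, eulOmegaSpan_eq_weylD⟩

/-- the family `{e^γ ∘ ω_l : γ ∈ ℕ^n, l ∈ ℤ^n}` is a ℂ-basis of the Weyl
algebra `D`: it is linearly independent and spans `D`. -/
theorem stmt2 (n : ℕ) (hn : 1 ≤ n) :
    LinearIndependent ℂ
      (fun p : (Fin n → ℕ) × (Fin n → ℤ) => eulPow n p.1 * omegaOp n p.2) ∧
    Submodule.span ℂ
        (Set.range fun p : (Fin n → ℕ) × (Fin n → ℤ) => eulPow n p.1 * omegaOp n p.2)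
      = Subalgebra.toSubmodule (weylD n) :=
  stmt2_general n

end
end

section
/- Let l, l' ∈ ℤ^n. For each j set d_j = min(|l_j|, |l'_j|) if l_j l'_j < 0 and d_j = 0 otherwise, and let d = ∑_{j=1}^n d_j. Then there exists a nonzero scalar c ∈ ℂ such that [μ_l, μ_{l'}]_d = c · μ_{l+l'}. In particular, μ_{l+l'} lies in any subspace of Q containing μ_l and μ_{l'} and closed under all the transvectant products. -/
/-! The derivatives of the monomials are again monomials: `∂_{x_i} μ_l = (-l_i)₊ μ_{l + e_i}` and
`∂_{y_i} μ_l = (l_i)₊ μ_{l - e_i}`. Hence `Γ(μ_l ⊗ μ_{l'})` is a combination of the tensors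
`μ_{l ± e_i} ⊗ μ_{l' ∓ e_i}`, whose coefficient vanishes unless `l_i` and `l'_i` have opposite
signs, and each surviving step lowers `d` by one. Inductively `[μ_l, μ_{l'}]_d` is a sum, over
all orders of performing the `d` steps, of multiples of `μ_{l+l'}` that all carry the same sign
`(-1)^e` with `e = ∑_{l_j > 0} d_j` (only the steps with `l_i > 0` pick up a minus sign), so
nothing cancels. When `d = 0` no coordinates have opposite signs and `μ_l μ_{l'} = μ_{l+l'}`. -/

open MvPolynomial TensorProduct

noncomputable section

/-- The polynomial ring `Q = ℂ[x_1,…,x_n,y_1,…,y_n]`; the variable `x_j` is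
`X (Sum.inl j)` and `y_j` is `X (Sum.inr j)`. -/
abbrev Qn (n : ℕ) := MvPolynomial (Fin n ⊕ Fin n) ℂ

/-- The operator `Γ = ∑_i (∂/∂x_i ⊗ ∂/∂y_i − ∂/∂y_i ⊗ ∂/∂x_i)` on `Q ⊗_ℂ Q`. -/
def Gam (n : ℕ) : Module.End ℂ (Qn n ⊗[ℂ] Qn n) :=
  ∑ i : Fin n,
    (TensorProduct.map (pderiv (Sum.inl i)).toLinearMap (pderiv (Sum.inr i)).toLinearMap
      - TensorProduct.map (pderiv (Sum.inr i)).toLinearMap (pderiv (Sum.inl i)).toLinearMap)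

/-- The `k`-th transvectant `[f,g]_k = m(Γ^k(f ⊗ g))`, where `m` is multiplication. -/
def transv (n k : ℕ) (f g : Qn n) : Qn n :=
  LinearMap.mul' ℂ (Qn n) ((Gam n ^ k) (f ⊗ₜ[ℂ] g))

/-- The monomial `μ_l = ∏_{l_j > 0} y_j^{l_j} · ∏_{l_j < 0} x_j^{-l_j}`. -/
def mu (n : ℕ) (l : Fin n → ℤ) : Qn n :=
  ∏ j : Fin n,
    if 0 < l j then (X (Sum.inr j) : Qn n) ^ (l j).toNat
    else (X (Sum.inl j) : Qn n) ^ (-(l j)).toNat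

variable {n : ℕ}

def expo (l : Fin n → ℤ) : Fin n ⊕ Fin n →₀ ℕ :=
  Finsupp.equivFunOnFinite.symm (Sum.elim (fun j => (-l j).toNat) (fun j => (l j).toNat))

@[simp] lemma expo_inl (l : Fin n → ℤ) (j : Fin n) : expo l (Sum.inl j) = (-l j).toNat := rfl

@[simp] lemma expo_inr (l : Fin n → ℤ) (j : Fin n) : expo l (Sum.inr j) = (l j).toNat := rfl

lemma mu_eq_monomial (l : Fin n → ℤ) : mu n l = monomial (expo l) 1 := by
  rw [monomial_eq, C_1, one_mul, Finsupp.prod_fintype _ _ (fun _ => pow_zero _),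
    Fintype.prod_sum_type, ← Finset.prod_mul_distrib, mu]
  refine Finset.prod_congr rfl fun j _ => ?_
  split_ifs with h
  · rw [expo_inl, expo_inr, show (-l j).toNat = 0 by omega, pow_zero, one_mul]
  · rw [expo_inl, expo_inr, show (l j).toNat = 0 by omega, pow_zero, mul_one]

lemma pderiv_inl_mu (l : Fin n → ℤ) (i : Fin n) :
    pderiv (Sum.inl i) (mu n l) = ((-l i).toNat : ℂ) • mu n (l + Pi.single i 1) := by
  rw [mu_eq_monomial, mu_eq_monomial, pderiv_monomial, one_mul, smul_monomial, smul_eq_mul,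
    mul_one, expo_inl]
  by_cases h : l i < 0
  · congr 2
    ext (j | j) <;> by_cases hj : j = i <;> simp [hj] <;> omega
  · simp [show (-l i).toNat = 0 by omega]

lemma pderiv_inr_mu (l : Fin n → ℤ) (i : Fin n) :
    pderiv (Sum.inr i) (mu n l) = ((l i).toNat : ℂ) • mu n (l + Pi.single i (-1)) := by
  rw [mu_eq_monomial, mu_eq_monomial, pderiv_monomial, one_mul, smul_monomial, smul_eq_mul,
    mul_one, expo_inr]
  by_cases h : 0 < l i
  · congr 2
    ext (j | j) <;> by_cases hj : j = i <;> simp [hj] <;> omega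
  · simp [show (l i).toNat = 0 by omega]

lemma mu_mul_mu {l l' : Fin n → ℤ} (h : ∀ j, 0 ≤ l j * l' j) :
    mu n l * mu n l' = mu n (l + l') := by
  rw [mu_eq_monomial, mu_eq_monomial, mu_eq_monomial, monomial_mul, one_mul]
  congr 2
  ext (j | j) <;> rcases mul_nonneg_iff.mp (h j) with ⟨h₁, h₂⟩ | ⟨h₁, h₂⟩ <;> simp <;> omega

lemma transv_zero (f g : Qn n) : transv n 0 f g = f * g := rfl

lemma transv_succ (k : ℕ) (f g : Qn n) :
    transv n (k + 1) f g = ∑ i, (transv n k (pderiv (Sum.inl i) f) (pderiv (Sum.inr i) g)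
      - transv n k (pderiv (Sum.inr i) f) (pderiv (Sum.inl i) g)) := by
  simp [transv, pow_succ, Gam]

lemma transv_smul_smul (k : ℕ) (a b : ℂ) (f g : Qn n) :
    transv n k (a • f) (b • g) = (a * b) • transv n k f g := by
  simp only [transv, TensorProduct.smul_tmul_smul, map_smul]

lemma transv_succ_mu (k : ℕ) (l l' : Fin n → ℤ) :
    transv n (k + 1) (mu n l) (mu n l') = ∑ i,
      ((((-l i).toNat * (l' i).toNat : ℕ) : ℂ) •
          transv n k (mu n (l + Pi.single i 1)) (mu n (l' + Pi.single i (-1)))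
        - (((l i).toNat * (-l' i).toNat : ℕ) : ℂ) •
          transv n k (mu n (l + Pi.single i (-1))) (mu n (l' + Pi.single i 1))) := by
  simp only [transv_succ, pderiv_inl_mu, pderiv_inr_mu, transv_smul_smul, Nat.cast_mul]

def pairDefect (a b : ℤ) : ℕ := if a * b < 0 then min a.natAbs b.natAbs else 0

lemma pairDefect_pos_iff {a b : ℤ} : 0 < pairDefect a b ↔ a * b < 0 := by
  unfold pairDefect
  split_ifs with h
  · simp only [h, iff_true, lt_min_iff, Int.natAbs_pos]
    exact ⟨left_ne_zero_of_mul h.ne, right_ne_zero_of_mul h.ne⟩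
  · simp [h]

lemma pairDefect_add_one_add_neg_one {a b : ℤ} (ha : a < 0) (hb : 0 < b) :
    pairDefect (a + 1) (b + -1) + 1 = pairDefect a b := by
  unfold pairDefect
  simp only [mul_neg_iff]
  split_ifs <;> omega

lemma pairDefect_add_neg_one_add_one {a b : ℤ} (ha : 0 < a) (hb : b < 0) :
    pairDefect (a + -1) (b + 1) + 1 = pairDefect a b := by
  unfold pairDefect
  simp only [mul_neg_iff]
  split_ifs <;> omega

lemma sum_add_single_add_single {ι M : Type*} [Fintype ι] [DecidableEq ι] [AddCommMonoid M]
    (F : ℤ → ℤ → M) (l l' : ι → ℤ) (i : ι) (a b : ℤ) :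
    (∑ j, F ((l + Pi.single i a : ι → ℤ) j) ((l' + Pi.single i b : ι → ℤ) j)) + F (l i) (l' i)
      = (∑ j, F (l j) (l' j)) + F (l i + a) (l' i + b) := by
  rw [← Finset.add_sum_erase _ _ (Finset.mem_univ i),
    ← Finset.add_sum_erase _ _ (Finset.mem_univ i),
    Finset.sum_congr rfl (g := fun j => F (l j) (l' j)) fun j hj => by
      simp [Finset.ne_of_mem_erase hj]]
  simp only [Pi.add_apply, Pi.single_eq_same]
  abel

lemma add_single_add_add_single {ι M : Type*} [DecidableEq ι] [AddCommMonoid M] {l l' : ι → M}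
    {i : ι} {a b : M} (h : a + b = 0) :
    (l + Pi.single i a) + (l' + Pi.single i b) = l + l' := by
  rw [add_add_add_comm, ← Pi.single_add, h, Pi.single_zero, add_zero]

def defect (l l' : Fin n → ℤ) : ℕ := ∑ j, pairDefect (l j) (l' j)

def posDefect (l l' : Fin n → ℤ) : ℕ := ∑ j, if 0 < l j then pairDefect (l j) (l' j) else 0

lemma defect_add_single_one {l l' : Fin n → ℤ} {i : Fin n} (h₁ : l i < 0) (h₂ : 0 < l' i) :
    defect (l + Pi.single i 1) (l' + Pi.single i (-1)) + 1 = defect l l' := by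
  have := sum_add_single_add_single pairDefect l l' i 1 (-1)
  have := pairDefect_add_one_add_neg_one h₁ h₂
  unfold defect
  omega

lemma defect_add_single_neg_one {l l' : Fin n → ℤ} {i : Fin n} (h₁ : 0 < l i) (h₂ : l' i < 0) :
    defect (l + Pi.single i (-1)) (l' + Pi.single i 1) + 1 = defect l l' := by
  have := sum_add_single_add_single pairDefect l l' i (-1) 1
  have := pairDefect_add_neg_one_add_one h₁ h₂
  unfold defect
  omega

lemma posDefect_add_single_one {l l' : Fin n → ℤ} {i : Fin n} (h₁ : l i < 0) :
    posDefect (l + Pi.single i 1) (l' + Pi.single i (-1)) = posDefect l l' := by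
  have := sum_add_single_add_single (fun a b => if 0 < a then pairDefect a b else 0) l l' i 1 (-1)
  simp only [if_neg (show ¬ 0 < l i by omega), if_neg (show ¬ 0 < l i + 1 by omega)] at this
  simpa [posDefect] using this

lemma posDefect_add_single_neg_one {l l' : Fin n → ℤ} {i : Fin n} (h₁ : 0 < l i)
    (h₂ : l' i < 0) :
    posDefect (l + Pi.single i (-1)) (l' + Pi.single i 1) + 1 = posDefect l l' := by
  have := sum_add_single_add_single (fun a b => if 0 < a then pairDefect a b else 0) l l' i (-1) 1
  have : (if 0 < l i + -1 then pairDefect (l i + -1) (l' i + 1) else 0) + 1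
      = pairDefect (l i) (l' i) := by
    unfold pairDefect
    simp only [mul_neg_iff]
    split_ifs <;> omega
  unfold posDefect
  simp only [if_pos h₁] at *
  omega

lemma natCast_defect (l l' : Fin n → ℤ) :
    (defect l l' : ℤ) = ∑ j, if l j * l' j < 0 then min |l j| |l' j| else 0 := by
  push_cast [defect, pairDefect, Nat.cast_ite, Nat.cast_min, Int.natCast_natAbs]
  rfl

lemma transv_succ_mu_summand_eq {k : ℕ}
    (ih : ∀ m m' : Fin n → ℤ, defect m m' = k → ∃ p : ℝ, 0 < p ∧
      transv n k (mu n m) (mu n m') = ((-1) ^ posDefect m m' * p : ℂ) • mu n (m + m'))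
    {l l' : Fin n → ℤ} (h : defect l l' = k + 1) (i : Fin n) :
    ∃ q : ℝ, 0 ≤ q ∧ (l i * l' i < 0 → 0 < q) ∧
      (((-l i).toNat * (l' i).toNat : ℕ) : ℂ) •
          transv n k (mu n (l + Pi.single i 1)) (mu n (l' + Pi.single i (-1)))
        - (((l i).toNat * (-l' i).toNat : ℕ) : ℂ) •
          transv n k (mu n (l + Pi.single i (-1))) (mu n (l' + Pi.single i 1))
        = ((-1) ^ posDefect l l' * q : ℂ) • mu n (l + l') := by
  by_cases hA : l i < 0 ∧ 0 < l' i
  · obtain ⟨p, hp, heq⟩ := ih (l + Pi.single i 1) (l' + Pi.single i (-1))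
      (by have := defect_add_single_one hA.1 hA.2; omega)
    have hc : 0 < (-l i).toNat * (l' i).toNat := Nat.mul_pos (by omega) (by omega)
    refine ⟨((-l i).toNat * (l' i).toNat : ℕ) * p, by positivity, fun _ => by positivity, ?_⟩
    rw [heq, add_single_add_add_single (by norm_num), posDefect_add_single_one hA.1,
      show (l i).toNat = 0 by omega, zero_mul, Nat.cast_zero, zero_smul, sub_zero, smul_smul]
    congr 1
    push_cast
    ring
  by_cases hB : 0 < l i ∧ l' i < 0
  · obtain ⟨p, hp, heq⟩ := ih (l + Pi.single i (-1)) (l' + Pi.single i 1)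
      (by have := defect_add_single_neg_one hB.1 hB.2; omega)
    have hc : 0 < (l i).toNat * (-l' i).toNat := Nat.mul_pos (by omega) (by omega)
    refine ⟨((l i).toNat * (-l' i).toNat : ℕ) * p, by positivity, fun _ => by positivity, ?_⟩
    rw [heq, add_single_add_add_single (by norm_num), ← posDefect_add_single_neg_one hB.1 hB.2,
      show (-l i).toNat = 0 by omega, zero_mul, Nat.cast_zero, zero_smul, zero_sub, smul_smul,
      ← neg_smul]
    congr 1
    push_cast
    ring
  · refine ⟨0, le_rfl, fun hi => by rcases mul_neg_iff.mp hi with hi | hi <;> tauto, ?_⟩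
    have hx : (-l i).toNat * (l' i).toNat = 0 := Nat.mul_eq_zero.mpr (by omega)
    have hy : (l i).toNat * (-l' i).toNat = 0 := Nat.mul_eq_zero.mpr (by omega)
    simp [hx, hy]

theorem transv_mu_mu_of_defect_eq (k : ℕ) (l l' : Fin n → ℤ) (h : defect l l' = k) :
    ∃ p : ℝ, 0 < p ∧
      transv n k (mu n l) (mu n l') = ((-1) ^ posDefect l l' * p : ℂ) • mu n (l + l') := by
  induction k generalizing l l' with
  | zero =>
    have hzero : ∀ j, pairDefect (l j) (l' j) = 0 := fun j =>
      Finset.sum_eq_zero_iff.mp h j (Finset.mem_univ j)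
    have hsign : ∀ j, 0 ≤ l j * l' j := fun j =>
      not_lt.mp fun hj => (pairDefect_pos_iff.mpr hj).ne' (hzero j)
    have hpos : posDefect l l' = 0 := Finset.sum_eq_zero fun j _ => by simp [hzero j]
    exact ⟨1, one_pos, by simp [transv_zero, mu_mul_mu hsign, hpos]⟩
  | succ k ih =>
    choose q hq₀ hq_pos hq using transv_succ_mu_summand_eq ih h
    have hne : defect l l' ≠ 0 := by omega
    obtain ⟨i, -, hi⟩ := Finset.exists_ne_zero_of_sum_ne_zero hne
    refine ⟨∑ i, q i, Finset.sum_pos' (fun i _ => hq₀ i)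
      ⟨i, Finset.mem_univ i, hq_pos i (pairDefect_pos_iff.mp (Nat.pos_of_ne_zero hi))⟩, ?_⟩
    rw [transv_succ_mu, Finset.sum_congr rfl fun i _ => hq i, ← Finset.sum_smul]
    push_cast [Finset.mul_sum]
    rfl

theorem stmt7_general (n : ℕ) (l l' : Fin n → ℤ) (d : ℕ)
    (hd : (d : ℤ) = ∑ j, if l j * l' j < 0 then min |l j| |l' j| else 0) :
    (∃ c : ℂ, c ≠ 0 ∧ transv n d (mu n l) (mu n l') = c • mu n (l + l')) ∧
    (∀ S : Submodule ℂ (Qn n), mu n l ∈ S → mu n l' ∈ S →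
      (∀ f ∈ S, ∀ g ∈ S, ∀ k : ℕ, transv n k f g ∈ S) → mu n (l + l') ∈ S) := by
  obtain ⟨p, hp, heq⟩ :=
    transv_mu_mu_of_defect_eq d l l' (by rw [← Nat.cast_inj (R := ℤ), natCast_defect, hd])
  have hc : ((-1) ^ posDefect l l' * p : ℂ) ≠ 0 :=
    mul_ne_zero (pow_ne_zero _ (by norm_num)) (by exact_mod_cast hp.ne')
  refine ⟨⟨_, hc, heq⟩, fun S hl hl' hS => ?_⟩
  have := S.smul_mem ((-1) ^ posDefect l l' * p : ℂ)⁻¹ (hS _ hl _ hl' d)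
  rwa [heq, inv_smul_smul₀ hc] at this

/-- with `d = ∑_j d_j`, where `d_j = min(|l_j|, |l'_j|)` if `l_j l'_j < 0`
and `d_j = 0` otherwise, there is a nonzero scalar `c` with `[μ_l, μ_{l'}]_d = c·μ_{l+l'}`;
in particular `μ_{l+l'}` lies in any subspace of `Q` containing `μ_l` and `μ_{l'}` and
closed under all transvectant products. -/
theorem stmt7 (n : ℕ) (hn : 1 ≤ n) (l l' : Fin n → ℤ) (d : ℕ)
    (hd : (d : ℤ) = ∑ j, if l j * l' j < 0 then min |l j| |l' j| else 0) :
    (∃ c : ℂ, c ≠ 0 ∧ transv n d (mu n l) (mu n l') = c • mu n (l + l')) ∧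
    (∀ S : Submodule ℂ (Qn n), mu n l ∈ S → mu n l' ∈ S →
      (∀ f ∈ S, ∀ g ∈ S, ∀ k : ℕ, transv n k f g ∈ S) → mu n (l + l') ∈ S) :=
  stmt7_general n l l' d hd

end
end

section
/- Sym^𝔤 is a *-subalgebra of Q: for all f, g ∈ Sym^𝔤 and all k ≥ 0, the transvectant [f,g]_k again lies in Sym^𝔤. -/
/-!
Give `x_j` the weight `-e_j` and `y_j` the weight `e_j`, so that `x^b y^a` has weight `a - b`
and `Sym^𝔤` is the span of the monomials of weight in `A^⊥`. In `Q ⊗ Q`, the span of the pairs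
of monomials whose total weight lies in `A^⊥` contains `f ⊗ g`; it is preserved by `Γ`, because
in each term of `Γ` the two partial derivatives shift the weights of the two factors by
opposite amounts; and multiplication, which adds weights, maps it into `Sym^𝔤`.
-/

open MvPolynomial TensorProduct

noncomputable section

/-- The orthogonal complement `A^⊥ = {u ∈ ℂ^n : ∑_j u_j a_j = 0 for all a ∈ A}`. -/
def perpC (n : ℕ) (A : Submodule ℂ (Fin n → ℂ)) : Set (Fin n → ℂ) :=
  {u | ∀ v ∈ A, ∑ j, u j * v j = 0}

/-- `Sym^𝔤`: the ℂ-linear span of the monomials `x^b y^a` with `a - b ∈ A^⊥`. -/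
def SymG (n : ℕ) (A : Submodule ℂ (Fin n → ℂ)) : Submodule ℂ (Qn n) :=
  Submodule.span ℂ {q : Qn n | ∃ a b : Fin n → ℕ,
    (fun j => ((a j : ℂ) - (b j : ℂ))) ∈ perpC n A ∧
    q = (∏ j : Fin n, (X (Sum.inl j) : Qn n) ^ b j) *
        ∏ j : Fin n, (X (Sum.inr j) : Qn n) ^ a j}

open Finsupp (weight)

section WeightPairs

variable {R σ M : Type*} [CommRing R] [AddCommGroup M] (w : σ → M)

lemma Finsupp.weight_tsub_single_one {d : σ →₀ ℕ} {s : σ} (hs : d s ≠ 0) :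
    weight w (d - Finsupp.single s 1) = weight w d - w s := by
  have hle : Finsupp.single s 1 ≤ d := Finsupp.single_le_iff.2 (Nat.one_le_iff_ne_zero.2 hs)
  conv_rhs => rw [← tsub_add_cancel_of_le hle, map_add, Finsupp.weight_single, one_smul]
  abel

variable (R) in
def weightPairSpan (S : Set M) : Submodule R (MvPolynomial σ R ⊗[R] MvPolynomial σ R) :=
  Submodule.span R {t | ∃ d e : σ →₀ ℕ, weight w d + weight w e ∈ S ∧
    t = monomial d (1 : R) ⊗ₜ monomial e (1 : R)}

lemma tmul_mem_weightPairSpan (S : AddSubmonoid M) {f g : MvPolynomial σ R}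
    (hf : f ∈ restrictSupport R (weight w ⁻¹' S))
    (hg : g ∈ restrictSupport R (weight w ⁻¹' S)) :
    f ⊗ₜ g ∈ weightPairSpan R w S := by
  rw [restrictSupport_eq_span] at hf hg
  have := Submodule.apply_mem_map₂ (TensorProduct.mk R _ _) hf hg
  rw [Submodule.map₂_span_span] at this
  refine Submodule.span_le.2 ?_ this
  rintro _ ⟨_, ⟨d, hd, rfl⟩, _, ⟨e, he, rfl⟩, rfl⟩
  exact Submodule.subset_span ⟨d, e, S.add_mem hd he, rfl⟩

lemma mapsTo_map_pderiv_weightPairSpan {s t : σ} (hst : w s + w t = 0) (S : Set M) :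
    Set.MapsTo (TensorProduct.map (pderiv (R := R) s).toLinearMap (pderiv t).toLinearMap)
      (weightPairSpan R w S : Set _) (weightPairSpan R w S) := by
  refine fun x hx => (Submodule.span_le (p := (weightPairSpan R w S).comap _)).2 ?_ hx
  rintro _ ⟨d, e, hde, rfl⟩
  rw [SetLike.mem_coe, Submodule.mem_comap, TensorProduct.map_tmul]
  simp only [Derivation.coeFn_coe, pderiv_monomial, one_mul]
  by_cases hs : d s = 0
  · simp [hs]
  by_cases ht : e t = 0
  · simp [ht]
  have monomial_eq_smul (m : σ →₀ ℕ) (c : R) : monomial m c = c • monomial m 1 := by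
    rw [smul_monomial, smul_eq_mul, mul_one]
  rw [monomial_eq_smul, monomial_eq_smul (e - _), TensorProduct.smul_tmul_smul]
  refine Submodule.smul_mem _ _ (Submodule.subset_span ⟨_, _, ?_, rfl⟩)
  rw [Finsupp.weight_tsub_single_one w hs, Finsupp.weight_tsub_single_one w ht]
  convert hde using 1
  linear_combination (norm := abel) -hst

lemma mul'_mem_restrictSupport (S : Set M) {x : MvPolynomial σ R ⊗[R] MvPolynomial σ R}
    (hx : x ∈ weightPairSpan R w S) :
    LinearMap.mul' R _ x ∈ restrictSupport R (weight w ⁻¹' S) := by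
  refine (Submodule.span_le (p := (restrictSupport R _).comap (LinearMap.mul' R _))).2 ?_ hx
  rintro _ ⟨d, e, hde, rfl⟩
  rw [SetLike.mem_coe, Submodule.mem_comap, LinearMap.mul'_apply, monomial_mul, one_mul,
    monomial_mem_restrictSupport, Set.mem_preimage, map_add]
  exact Or.inl hde

end WeightPairs

lemma MvPolynomial.monomial_one_eq_prod_inl_mul_prod_inr {R ι κ : Type*} [CommSemiring R]
    [Fintype ι] [Fintype κ] (d : ι ⊕ κ →₀ ℕ) :
    monomial d (1 : R) =
      (∏ i, X (Sum.inl i) ^ d (Sum.inl i)) * ∏ j, X (Sum.inr j) ^ d (Sum.inr j) := by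
  rw [monomial_eq, C_1, one_mul, Finsupp.prod_fintype _ _ (fun _ => pow_zero _),
    Fintype.prod_sum_type]

def xyWeight (n : ℕ) : Fin n ⊕ Fin n → Fin n → ℂ :=
  Sum.elim (fun j => -Pi.single j 1) (fun j => Pi.single j 1)

lemma weight_xyWeight {n : ℕ} (d : Fin n ⊕ Fin n →₀ ℕ) :
    weight (xyWeight n) d = fun j => (d (Sum.inr j) : ℂ) - d (Sum.inl j) := by
  ext j
  simp [Finsupp.weight_eq_sum, Fintype.sum_sum_type, xyWeight, Pi.single_apply, sub_eq_neg_add]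

lemma SymG_eq_restrictSupport (n : ℕ) (A : Submodule ℂ (Fin n → ℂ)) :
    SymG n A = restrictSupport ℂ (weight (xyWeight n) ⁻¹' perpC n A) := by
  rw [SymG, restrictSupport_eq_span]
  congr 1
  ext q
  constructor
  · rintro ⟨a, b, hab, rfl⟩
    refine ⟨Finsupp.equivFunOnFinite.symm (Sum.elim b a), ?_, ?_⟩
    · simpa [Set.mem_preimage, weight_xyWeight] using hab
    · simp [monomial_one_eq_prod_inl_mul_prod_inr]
  · rintro ⟨d, hd, rfl⟩
    refine ⟨fun j => d (Sum.inr j), fun j => d (Sum.inl j), ?_, ?_⟩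
    · rwa [Set.mem_preimage, weight_xyWeight] at hd
    · exact monomial_one_eq_prod_inl_mul_prod_inr d

def perpAddSubmonoid (n : ℕ) (A : Submodule ℂ (Fin n → ℂ)) : AddSubmonoid (Fin n → ℂ) where
  carrier := perpC n A
  zero_mem' _ _ := by simp
  add_mem' hu hv w hw := by
    simp only [Pi.add_apply, add_mul, Finset.sum_add_distrib, hu w hw, hv w hw, add_zero]

lemma mapsTo_Gam {n : ℕ} (S : Set (Fin n → ℂ)) :
    Set.MapsTo (Gam n) (weightPairSpan ℂ (xyWeight n) S : Set _)
      (weightPairSpan ℂ (xyWeight n) S) := by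
  intro x hx
  rw [Gam, LinearMap.sum_apply]
  refine Submodule.sum_mem _ fun i _ => Submodule.sub_mem _ ?_ ?_ <;>
    exact mapsTo_map_pderiv_weightPairSpan _ (by simp [xyWeight]) S hx

theorem stmt9_general (n : ℕ) (A : Submodule ℂ (Fin n → ℂ)) :
    ∀ f ∈ SymG n A, ∀ g ∈ SymG n A, ∀ k : ℕ, transv n k f g ∈ SymG n A := by
  intro f hf g hg k
  rw [SymG_eq_restrictSupport] at hf hg ⊢
  refine mul'_mem_restrictSupport _ _ ?_
  rw [Module.End.coe_pow]
  exact (mapsTo_Gam _).iterate k (tmul_mem_weightPairSpan _ (perpAddSubmonoid n A) hf hg)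

/-- `Sym^𝔤` is a `*`-subalgebra of `Q`: it is closed under all the
transvectant products `[·,·]_k`, `k ≥ 0`. -/
theorem stmt9 (n : ℕ) (hn : 1 ≤ n) (A : Submodule ℂ (Fin n → ℂ)) :
    ∀ f ∈ SymG n A, ∀ g ∈ SymG n A, ∀ k : ℕ, transv n k f g ∈ SymG n A :=
  stmt9_general n A

end
end

section
/- Suppose A ⊆ ℂ^n is a subspace whose perpendicular lattice A^⊥ ∩ ℤ^n has ℤ-basis l^1,…,l^r. Then the smallest ℂ-subspace of Q that contains the elements 1, x_1 y_1, …, x_n y_n, μ_{l^1}, …, μ_{l^r}, μ_{-l^1}, …, μ_{-l^r} and is closed under all the transvectant products (f,g) ↦ [f,g]_k for k ≥ 0 is equal to Sym^𝔤. In other words, Sym^𝔤 is generated as a *-algebra by this finite collection. -/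
/-!
Give `x_j` the weight `-e_j` and `y_j` the weight `e_j`, so that `x^b y^a` has weight `a - b` and
`Sym^𝔤` is spanned by the monomials whose weight lies in the lattice `L = A^⊥ ∩ ℤ^n`. Each term of
`Γ` moves weight `e_i` from one tensor factor to the other, so the total weight of a tensor of
monomials is preserved by `Γ`; hence `Sym^𝔤` contains the generators and is closed under all
transvectants.

Conversely, a subspace `S` closed under transvectants is closed under products (`[f,g]_0 = fg`),
and `[x_j y_j, -]_2 = -2 ∂_{x_j} ∂_{y_j}` sends `x_j y_j m` to a nonzero multiple of the monomial
`m`. So the exponents of the monomials in `S` form a monoid which may be cancelled along the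
diagonal exponents of the `x_j y_j`. Products of powers of the `μ_{±l^i}` give a monomial of every
weight in `L`, and two monomials of the same weight agree up to such diagonal factors.
-/

open MvPolynomial TensorProduct

noncomputable section

namespace Transvectant

section Exponents

variable {ι : Type*}

def diagExp (j : ι) : ι ⊕ ι →₀ ℕ :=
  Finsupp.single (Sum.inl j) 1 + Finsupp.single (Sum.inr j) 1

lemma mem_of_add_mem_closure_diagExp {M : AddSubmonoid (ι ⊕ ι →₀ ℕ)}
    (hcancel : ∀ d j, d + diagExp j ∈ M → d ∈ M)
    {e : ι ⊕ ι →₀ ℕ} (he : e ∈ AddSubmonoid.closure (Set.range diagExp)) :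
    ∀ d, d + e ∈ M → d ∈ M := by
  induction he using AddSubmonoid.closure_induction with
  | mem e he => obtain ⟨j, rfl⟩ := he; exact fun d => hcancel d j
  | zero => simp
  | add e e' _ _ h h' => exact fun d hd => h d (h' _ (by rwa [add_assoc]))

variable [DecidableEq ι]

lemma diagExp_apply_inl (j k : ι) : diagExp j (Sum.inl k) = if j = k then 1 else 0 := by
  simp [diagExp, Finsupp.single_apply]

lemma diagExp_apply_inr (j k : ι) : diagExp j (Sum.inr k) = if j = k then 1 else 0 := by
  simp [diagExp, Finsupp.single_apply]

def xyWeight : ι ⊕ ι → ι → ℤ :=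
  Sum.elim (fun j => -Pi.single j 1) (fun j => Pi.single j 1)

variable [Fintype ι]

lemma weight_xyWeight_apply (d : ι ⊕ ι →₀ ℕ) (j : ι) :
    d.weight xyWeight j = d (Sum.inr j) - d (Sum.inl j) := by
  simp [Finsupp.weight_eq_sum, Fintype.sum_sum_type, xyWeight, Pi.single_apply]
  ring

def muExp (u : ι → ℤ) : ι ⊕ ι →₀ ℕ :=
  Finsupp.equivFunOnFinite.symm (Sum.elim (fun j => (-u j).toNat) fun j => (u j).toNat)

lemma weight_muExp (u : ι → ℤ) : (muExp u).weight xyWeight = u := by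
  funext j
  simp [weight_xyWeight_apply, muExp]

lemma add_sum_eq_add_sum_of_weight_eq {d d₀ : ι ⊕ ι →₀ ℕ}
    (h : d.weight xyWeight = d₀.weight xyWeight) :
    d + ∑ j, d₀ (Sum.inl j) • diagExp j = d₀ + ∑ j, d (Sum.inl j) • diagExp j := by
  ext (k | k)
  · simp [diagExp_apply_inl, add_comm]
  · have hk := congrFun h k
    simp only [weight_xyWeight_apply] at hk
    simp [diagExp_apply_inr]
    omega

variable {M : AddSubmonoid (ι ⊕ ι →₀ ℕ)}

lemma exists_mem_weight_eq {L : Set (ι → ℤ)}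
    (hL : ∀ u ∈ L, muExp u ∈ M ∧ muExp (-u) ∈ M)
    {u : ι → ℤ} (hu : u ∈ AddSubgroup.closure L) :
    ∃ d ∈ M, d.weight xyWeight = u := by
  have hle : (AddSubgroup.closure L).toAddSubmonoid ≤ M.map (Finsupp.weight xyWeight) := by
    rw [AddSubgroup.closure_toAddSubmonoid, AddSubmonoid.closure_le]
    rintro v (hv | hv)
    · exact ⟨muExp v, (hL v hv).1, weight_muExp v⟩
    · exact ⟨muExp (-(-v)), (hL (-v) hv).2, by rw [weight_muExp, neg_neg]⟩
  exact hle hu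

theorem mem_of_weight_mem_closure (hdiag : ∀ j, diagExp j ∈ M)
    (hcancel : ∀ d j, d + diagExp j ∈ M → d ∈ M) {L : Set (ι → ℤ)}
    (hL : ∀ u ∈ L, muExp u ∈ M ∧ muExp (-u) ∈ M) {d : ι ⊕ ι →₀ ℕ}
    (hd : d.weight xyWeight ∈ AddSubgroup.closure L) : d ∈ M := by
  obtain ⟨d₀, hd₀, hw⟩ := exists_mem_weight_eq hL hd
  have hsum (N : ι → ℕ) :
      ∑ j, N j • diagExp j ∈ AddSubmonoid.closure (Set.range diagExp) :=
    sum_mem fun j _ => nsmul_mem (AddSubmonoid.subset_closure (Set.mem_range_self j)) _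
  have hdiagM : AddSubmonoid.closure (Set.range diagExp) ≤ M :=
    AddSubmonoid.closure_le.2 (Set.range_subset_iff.2 hdiag)
  refine mem_of_add_mem_closure_diagExp hcancel (hsum fun j => d₀ (Sum.inl j)) d ?_
  rw [add_sum_eq_add_sum_of_weight_eq hw.symm]
  exact add_mem hd₀ (hdiagM (hsum _))

end Exponents

section Polynomials

variable {R : Type*} [CommSemiring R] {ι : Type*}

lemma X_mul_X_eq_monomial_diagExp (j : ι) :
    (X (Sum.inl j) * X (Sum.inr j) : MvPolynomial (ι ⊕ ι) R) = monomial (diagExp j) 1 := by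
  rw [diagExp, ← one_mul (1 : R), ← monomial_mul]
  rfl

lemma prod_X_pow_mul_prod_X_pow [Fintype ι] (b a : ι → ℕ) :
    (∏ j, (X (Sum.inl j) : MvPolynomial (ι ⊕ ι) R) ^ b j) * ∏ j, X (Sum.inr j) ^ a j =
      monomial (Finsupp.equivFunOnFinite.symm (Sum.elim b a)) 1 := by
  rw [monomial_eq, C_1, one_mul, Finsupp.prod_fintype _ _ (by simp), Fintype.prod_sum_type]
  simp

lemma pderiv_monomial_add_single (s : ι) (d : ι →₀ ℕ) (c : R) :
    pderiv s (monomial (d + Finsupp.single s 1) c) = monomial d (c * (d s + 1)) := by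
  simp

def monomialExponents (B : Subalgebra R (MvPolynomial ι R)) : AddSubmonoid (ι →₀ ℕ) where
  carrier := {d | monomial d 1 ∈ B}
  add_mem' hd he := by simpa [monomial_mul] using B.mul_mem hd he
  zero_mem' := by simp

variable (R) [DecidableEq ι]

def weightSupported (L : Set (ι → ℤ)) : Submodule R (MvPolynomial (ι ⊕ ι) R) :=
  restrictSupport R {d | d.weight xyWeight ∈ L}

def tensorWeightSupported (L : Set (ι → ℤ)) :
    Submodule R (MvPolynomial (ι ⊕ ι) R ⊗[R] MvPolynomial (ι ⊕ ι) R) :=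
  Submodule.span R {t | ∃ d d' c c', d.weight xyWeight + d'.weight xyWeight ∈ L ∧
    t = monomial d c ⊗ₜ monomial d' c'}

variable {R}

lemma monomial_mem_weightSupported {L : Set (ι → ℤ)} {d : ι ⊕ ι →₀ ℕ}
    (hd : d.weight xyWeight ∈ L) : monomial d 1 ∈ weightSupported R L :=
  (monomial_mem_restrictSupport R).2 (.inl hd)

lemma weightSupported_mono {L L' : Set (ι → ℤ)} (h : L ⊆ L') :
    weightSupported R L ≤ weightSupported R L' :=
  restrictSupport_mono R fun _ hd => h hd

variable {L : AddSubmonoid (ι → ℤ)}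

lemma one_mem_weightSupported : 1 ∈ weightSupported R (L : Set (ι → ℤ)) := by
  simpa using monomial_mem_weightSupported (R := R) (d := 0) (by simp [zero_mem])

lemma X_mul_X_mem_weightSupported (j : ι) :
    X (Sum.inl j) * X (Sum.inr j) ∈ weightSupported R (L : Set (ι → ℤ)) := by
  rw [X_mul_X_eq_monomial_diagExp]
  exact monomial_mem_weightSupported (by simp [diagExp, xyWeight, Finsupp.weight_single, zero_mem])

lemma tmul_mem_tensorWeightSupported {f g : MvPolynomial (ι ⊕ ι) R}
    (hf : f ∈ weightSupported R L) (hg : g ∈ weightSupported R L) :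
    f ⊗ₜ g ∈ tensorWeightSupported R L := by
  rw [← support_sum_monomial_coeff f, ← support_sum_monomial_coeff g, sum_tmul]
  refine sum_mem fun d hd => ?_
  rw [tmul_sum]
  exact sum_mem fun d' hd' => Submodule.subset_span ⟨d, d', _, _, add_mem (hf hd) (hg hd'), rfl⟩

lemma map_pderiv_mem_tensorWeightSupported {s s' : ι ⊕ ι} (hss' : xyWeight s + xyWeight s' = 0)
    {t : MvPolynomial (ι ⊕ ι) R ⊗[R] MvPolynomial (ι ⊕ ι) R}
    (ht : t ∈ tensorWeightSupported R L) :
    map (pderiv s).toLinearMap (pderiv s').toLinearMap t ∈ tensorWeightSupported R L := by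
  induction ht using Submodule.span_induction with
  | mem t ht =>
    obtain ⟨d, d', c, c', hw, rfl⟩ := ht
    simp only [map_tmul, Derivation.coeFn_coe, pderiv_monomial]
    by_cases hd : d s = 0
    · simp [hd]
    by_cases hd' : d' s' = 0
    · simp [hd']
    refine Submodule.subset_span ⟨_, _, _, _, ?_, rfl⟩
    have e := Finsupp.weight_sub_single_add (w := xyWeight) hd
    have e' := Finsupp.weight_sub_single_add (w := xyWeight) hd'
    convert hw using 1
    linear_combination e + e' - hss'
  | zero => simp
  | add x y _ _ hx hy => rw [map_add]; exact add_mem hx hy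
  | smul c x _ hx => rw [map_smul]; exact Submodule.smul_mem _ _ hx

lemma mul'_mem_weightSupported {t : MvPolynomial (ι ⊕ ι) R ⊗[R] MvPolynomial (ι ⊕ ι) R}
    (ht : t ∈ tensorWeightSupported R L) :
    LinearMap.mul' R _ t ∈ weightSupported R L := by
  induction ht using Submodule.span_induction with
  | mem t ht =>
    obtain ⟨d, d', c, c', hw, rfl⟩ := ht
    rw [LinearMap.mul'_apply, monomial_mul]
    exact (monomial_mem_restrictSupport R).2 (.inl (by simpa using hw))
  | zero => simp
  | add x y _ _ hx hy => rw [map_add]; exact add_mem hx hy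
  | smul c x _ hx => rw [map_smul]; exact Submodule.smul_mem _ _ hx

end Polynomials

lemma mu_eq_monomial {n : ℕ} (u : Fin n → ℤ) : mu n u = monomial (muExp u) 1 := by
  rw [muExp, ← prod_X_pow_mul_prod_X_pow, ← Finset.prod_mul_distrib]
  refine Finset.prod_congr rfl fun j _ => ?_
  by_cases h : 0 < u j
  · simp [h, show (-u j).toNat = 0 by omega]
  · simp [h, show (u j).toNat = 0 by omega]

lemma mu_mem_weightSupported {n : ℕ} {L : Set (Fin n → ℤ)} {u : Fin n → ℤ}
    (hu : u ∈ L) :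
    mu n u ∈ weightSupported ℂ L := by
  rw [mu_eq_monomial]
  exact monomial_mem_weightSupported (by rwa [weight_muExp])

section Transvectants

variable {n : ℕ}

lemma Gam_tmul (f g : Qn n) :
    Gam n (f ⊗ₜ g) = ∑ i, (pderiv (Sum.inl i) f ⊗ₜ pderiv (Sum.inr i) g
      - pderiv (Sum.inr i) f ⊗ₜ pderiv (Sum.inl i) g) := by
  simp [Gam]

lemma Gam_X_inl_tmul (j : Fin n) (g : Qn n) :
    Gam n (X (Sum.inl j) ⊗ₜ g) = 1 ⊗ₜ pderiv (Sum.inr j) g := by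
  simp [Gam_tmul, Pi.single_apply, ite_tmul]

lemma Gam_X_inr_tmul (j : Fin n) (g : Qn n) :
    Gam n (X (Sum.inr j) ⊗ₜ g) = -(1 ⊗ₜ pderiv (Sum.inl j) g) := by
  simp [Gam_tmul, Pi.single_apply, ite_tmul]

lemma Gam_X_mul_X_tmul (j : Fin n) (g : Qn n) :
    Gam n ((X (Sum.inl j) * X (Sum.inr j)) ⊗ₜ g) =
      X (Sum.inr j) ⊗ₜ pderiv (Sum.inr j) g - X (Sum.inl j) ⊗ₜ pderiv (Sum.inl j) g := by
  simp [Gam_tmul, Pi.single_apply, ite_tmul]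

lemma transv_zero (f g : Qn n) : transv n 0 f g = f * g := by
  simp [transv]

lemma transv_two_X_mul_X (j : Fin n) (g : Qn n) :
    transv n 2 (X (Sum.inl j) * X (Sum.inr j)) g =
      -pderiv (Sum.inl j) (pderiv (Sum.inr j) g) - pderiv (Sum.inr j) (pderiv (Sum.inl j) g) := by
  simp [transv, pow_two, Gam_X_mul_X_tmul, Gam_X_inl_tmul, Gam_X_inr_tmul]

lemma transv_two_X_mul_X_monomial (j : Fin n) (d : Fin n ⊕ Fin n →₀ ℕ) (c : ℂ) :
    transv n 2 (X (Sum.inl j) * X (Sum.inr j)) (monomial (d + diagExp j) c) =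
      monomial d (-2 * ((d (Sum.inl j) + 1) * (d (Sum.inr j) + 1)) * c) := by
  have hxy : pderiv (Sum.inl j) (pderiv (Sum.inr j) (monomial (d + diagExp j) c)) =
      monomial d (c * (d (Sum.inr j) + 1) * (d (Sum.inl j) + 1)) := by
    rw [diagExp, ← add_assoc, pderiv_monomial_add_single, pderiv_monomial_add_single]
    simp
  have hyx : pderiv (Sum.inr j) (pderiv (Sum.inl j) (monomial (d + diagExp j) c)) =
      monomial d (c * (d (Sum.inl j) + 1) * (d (Sum.inr j) + 1)) := by
    rw [diagExp, add_comm (Finsupp.single _ _), ← add_assoc, pderiv_monomial_add_single,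
      pderiv_monomial_add_single]
    simp
  rw [transv_two_X_mul_X, hxy, hyx, ← map_neg, ← map_sub]
  ring_nf

lemma Gam_mem_tensorWeightSupported {L : AddSubmonoid (Fin n → ℤ)} {t : Qn n ⊗[ℂ] Qn n}
    (ht : t ∈ tensorWeightSupported ℂ L) : Gam n t ∈ tensorWeightSupported ℂ L := by
  have hw (i : Fin n) : xyWeight (Sum.inl i) + xyWeight (Sum.inr i) = 0 := by simp [xyWeight]
  simp only [Gam, LinearMap.coe_sum, Finset.sum_apply, LinearMap.sub_apply]
  exact sum_mem fun i _ => sub_mem (map_pderiv_mem_tensorWeightSupported (hw i) ht)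
    (map_pderiv_mem_tensorWeightSupported ((add_comm _ _).trans (hw i)) ht)

def TransvClosed (S : Submodule ℂ (Qn n)) : Prop :=
  ∀ f ∈ S, ∀ g ∈ S, ∀ k : ℕ, transv n k f g ∈ S

theorem transvClosed_weightSupported (L : AddSubmonoid (Fin n → ℤ)) :
    TransvClosed (weightSupported ℂ (L : Set (Fin n → ℤ))) := by
  intro f hf g hg k
  refine mul'_mem_weightSupported ?_
  induction k with
  | zero => simpa using tmul_mem_tensorWeightSupported hf hg
  | succ k ih => rw [pow_succ', Module.End.mul_apply]; exact Gam_mem_tensorWeightSupported ih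

theorem weightSupported_closure_le_of_transvClosed {S : Submodule ℂ (Qn n)}
    (hS : TransvClosed S) (h1 : 1 ∈ S) (hxy : ∀ j, X (Sum.inl j) * X (Sum.inr j) ∈ S)
    {L : Set (Fin n → ℤ)} (hL : ∀ u ∈ L, mu n u ∈ S ∧ mu n (-u) ∈ S) :
    weightSupported ℂ (AddSubgroup.closure L : Set (Fin n → ℤ)) ≤ S := by
  rw [weightSupported, restrictSupport_eq_span, Submodule.span_le]
  rintro _ ⟨d, hd, rfl⟩
  let B := S.toSubalgebra h1 fun f g hf hg => transv_zero f g ▸ hS f hf g hg 0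
  change d ∈ monomialExponents B
  refine mem_of_weight_mem_closure (fun j => ?_) (fun d j hd => ?_) (fun u hu => ?_) hd
  · change monomial (diagExp j) 1 ∈ S
    rw [← X_mul_X_eq_monomial_diagExp]
    exact hxy j
  · have h := hS _ (hxy j) _ hd 2
    rw [transv_two_X_mul_X_monomial, ← smul_eq_mul, ← smul_monomial] at h
    refine (Submodule.smul_mem_iff S ?_).1 h
    exact mul_ne_zero (by norm_num)
      (mul_ne_zero (Nat.cast_add_one_ne_zero _) (Nat.cast_add_one_ne_zero _))
  · change monomial (muExp u) 1 ∈ S ∧ monomial (muExp (-u)) 1 ∈ S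
    simpa only [← mu_eq_monomial] using hL u hu

end Transvectants

section Lattice

def perpLattice (n : ℕ) (A : Submodule ℂ (Fin n → ℂ)) : AddSubgroup (Fin n → ℤ) where
  carrier := {u | (fun j => (u j : ℂ)) ∈ perpC n A}
  zero_mem' v _ := by simp
  add_mem' hu hw v hv := by simp [add_mul, Finset.sum_add_distrib, hu v hv, hw v hv]
  neg_mem' hu v hv := by simp [hu v hv]

variable {n : ℕ} {A : Submodule ℂ (Fin n → ℂ)}

lemma mem_perpLattice_iff {u : Fin n → ℤ} :
    u ∈ perpLattice n A ↔ (fun j => (u j : ℂ)) ∈ perpC n A :=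
  Iff.rfl

lemma weight_mem_perpLattice_iff (d : Fin n ⊕ Fin n →₀ ℕ) :
    d.weight xyWeight ∈ perpLattice n A ↔
      (fun j => (d (Sum.inr j) : ℂ) - d (Sum.inl j)) ∈ perpC n A := by
  simp [mem_perpLattice_iff, weight_xyWeight_apply]

lemma SymG_eq_weightSupported :
    SymG n A = weightSupported ℂ (perpLattice n A : Set (Fin n → ℤ)) := by
  rw [SymG, weightSupported, restrictSupport_eq_span]
  congr 1
  ext q
  constructor
  · rintro ⟨a, b, hab, rfl⟩
    refine ⟨_, ?_, (prod_X_pow_mul_prod_X_pow b a).symm⟩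
    simpa [weight_mem_perpLattice_iff] using hab
  · rintro ⟨d, hd, rfl⟩
    refine ⟨fun j => d (Sum.inr j), fun j => d (Sum.inl j), ?_, ?_⟩
    · exact (weight_mem_perpLattice_iff d).1 hd
    · rw [prod_X_pow_mul_prod_X_pow]
      congr
      ext (j | j) <;> rfl

end Lattice

end Transvectant

open Transvectant

theorem stmt10_general (n r : ℕ) (A : Submodule ℂ (Fin n → ℂ))
    (l : Fin r → Fin n → ℤ)
    (hl : ∀ i, (fun j => ((l i j : ℤ) : ℂ)) ∈ perpC n A)
    (hlZbasis : ∀ u : Fin n → ℤ, (fun j => ((u j : ℤ) : ℂ)) ∈ perpC n A →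
      ∃! c : Fin r → ℤ, u = ∑ i, c i • l i) :
    sInf {S : Submodule ℂ (Qn n) |
        (1 : Qn n) ∈ S ∧
        (∀ j : Fin n, (X (Sum.inl j) : Qn n) * X (Sum.inr j) ∈ S) ∧
        (∀ i, mu n (l i) ∈ S) ∧ (∀ i, mu n (-(l i)) ∈ S) ∧
        (∀ f ∈ S, ∀ g ∈ S, ∀ k : ℕ, transv n k f g ∈ S)}
      = SymG n A := by
  rw [SymG_eq_weightSupported]
  have hl' (i : Fin r) : l i ∈ perpLattice n A := mem_perpLattice_iff.2 (hl i)
  have hspan : (perpLattice n A : Set (Fin n → ℤ)) ⊆ AddSubgroup.closure (Set.range l) := by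
    intro u hu
    obtain ⟨c, rfl, -⟩ := hlZbasis u hu
    exact sum_mem fun i _ => zsmul_mem (AddSubgroup.subset_closure (Set.mem_range_self i)) _
  refine le_antisymm (sInf_le ⟨one_mem_weightSupported, X_mul_X_mem_weightSupported,
    fun i => mu_mem_weightSupported (hl' i), fun i => mu_mem_weightSupported (neg_mem (hl' i)),
    transvClosed_weightSupported (perpLattice n A).toAddSubmonoid⟩) (le_sInf ?_)
  rintro S ⟨h1, hxy, hmu, hmu', hS⟩
  exact (weightSupported_mono hspan).trans (weightSupported_closure_le_of_transvClosed hS h1 hxy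
    (Set.forall_mem_range.2 fun i => ⟨hmu i, hmu' i⟩))

/-- if the lattice `A^⊥ ∩ ℤ^n` has ℤ-basis `l^1, …, l^r`, then the
smallest ℂ-subspace of `Q` containing `1`, the `x_j y_j`, the `μ_{l^i}` and the
`μ_{-l^i}`, and closed under all transvectant products, is exactly `Sym^𝔤`. -/
theorem stmt10 (n r : ℕ) (hn : 1 ≤ n) (A : Submodule ℂ (Fin n → ℂ))
    (l : Fin r → Fin n → ℤ)
    (hl : ∀ i, (fun j => ((l i j : ℤ) : ℂ)) ∈ perpC n A)
    (hlZbasis : ∀ u : Fin n → ℤ, (fun j => ((u j : ℤ) : ℂ)) ∈ perpC n A →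
      ∃! c : Fin r → ℤ, u = ∑ i, c i • l i) :
    sInf {S : Submodule ℂ (Qn n) |
        (1 : Qn n) ∈ S ∧
        (∀ j : Fin n, (X (Sum.inl j) : Qn n) * X (Sum.inr j) ∈ S) ∧
        (∀ i, mu n (l i) ∈ S) ∧ (∀ i, mu n (-(l i)) ∈ S) ∧
        (∀ f ∈ S, ∀ g ∈ S, ∀ k : ℕ, transv n k f g ∈ S)}
      = SymG n A :=
  stmt10_general n r A l hl hlZbasis

end
end

section
/- Let A be the ℂ-subalgebra of the polynomial ring ℂ[X] generated by the two polynomials X² + X and 2X³ + 3X² + X. Then ℂ[X] is the internal direct sum of A and the one-dimensional subspace ℂ·X: every polynomial in ℂ[X] can be written uniquely as an element of A plus a scalar multiple of X; in particular A has codimension one in ℂ[X] and X ∉ A. -/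
/-!
Both generators take the same value at `0` and `-1`, so `zhuImage` lies in the subalgebra of
polynomials with `p(0) = p(-1)`. Conversely `f = X² + X = X(X + 1)` and `f·X = (g - f)/2` lie in
`zhuImage` (`g` the cubic generator); since `X² ≡ -X` modulo `f`, this gives `f·X^n ∈ zhuImage` for
all `n`, and every `p` with `p(0) = p(-1)` is `p(0) + f·q`. The complement `ℂ·X` then splits off
through the coefficient `p(0) - p(-1)`.
-/

open Polynomial

noncomputable section

/-- The ℂ-subalgebra of `ℂ[X]` generated by `X² + X` and `2X³ + 3X² + X`. -/
def zhuImage : Subalgebra ℂ (Polynomial ℂ) :=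
  Algebra.adjoin ℂ
    ({X ^ 2 + X, 2 * X ^ 3 + 3 * X ^ 2 + X} : Set (Polynomial ℂ))

namespace Polynomial

variable {R : Type*} [CommRing R] {a b : R}

theorem mul_X_pow_mem_of_mul_X_mem {S : Subalgebra R R[X]} (hf : (X - C a) * (X - C b) ∈ S)
    (hfX : (X - C a) * (X - C b) * X ∈ S) (n : ℕ) : (X - C a) * (X - C b) * X ^ n ∈ S := by
  induction n using Nat.twoStepInduction with
  | zero => simpa using hf
  | one => simpa using hfX
  | more n ih ih' =>
    have h : (X - C a) * (X - C b) * X ^ (n + 2) =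
        (X - C a) * (X - C b) * ((X - C a) * (X - C b) * X ^ n)
          + C (a + b) * ((X - C a) * (X - C b) * X ^ (n + 1))
          - C (a * b) * ((X - C a) * (X - C b) * X ^ n) := by
      simp only [map_add, map_mul]
      ring
    rw [h]
    exact S.sub_mem (S.add_mem (S.mul_mem hf ih) (S.mul_mem (S.algebraMap_mem _) ih'))
      (S.mul_mem (S.algebraMap_mem _) ih)

theorem mul_mem_of_mul_X_mem {S : Subalgebra R R[X]} (hf : (X - C a) * (X - C b) ∈ S)
    (hfX : (X - C a) * (X - C b) * X ∈ S) (q : R[X]) : (X - C a) * (X - C b) * q ∈ S := by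
  induction q using Polynomial.induction_on' with
  | add p q hp hq => rw [mul_add]; exact S.add_mem hp hq
  | monomial n r =>
    rw [← C_mul_X_pow_eq_monomial, mul_left_comm]
    exact S.mul_mem (S.algebraMap_mem r) (mul_X_pow_mem_of_mul_X_mem hf hfX n)

theorem exists_eq_C_add_mul_of_eval_eq (hab : IsUnit (a - b)) {p : R[X]}
    (hp : p.eval a = p.eval b) : ∃ q, p = C (p.eval a) + (X - C a) * (X - C b) * q := by
  have ha : X - C a ∣ p - C (p.eval a) := by simp [dvd_iff_isRoot]
  have hb : X - C b ∣ p - C (p.eval a) := by simp [dvd_iff_isRoot, hp]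
  obtain ⟨q, hq⟩ := (isCoprime_X_sub_C_of_isUnit_sub hab).mul_dvd ha hb
  exact ⟨q, by rw [← hq]; ring⟩

theorem equalizer_aeval_le (hab : IsUnit (a - b)) {S : Subalgebra R R[X]}
    (hf : (X - C a) * (X - C b) ∈ S) (hfX : (X - C a) * (X - C b) * X ∈ S) :
    AlgHom.equalizer (aeval a : R[X] →ₐ[R] R) (aeval b) ≤ S := by
  intro p hp
  rw [AlgHom.mem_equalizer, coe_aeval_eq_eval, coe_aeval_eq_eval] at hp
  obtain ⟨q, hq⟩ := exists_eq_C_add_mul_of_eval_eq hab hp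
  rw [hq]
  exact S.add_mem (S.algebraMap_mem _) (mul_mem_of_mul_X_mem hf hfX q)

theorem existsUnique_add_smul_X (hab : IsUnit (a - b)) (p : R[X]) :
    ∃! qc : AlgHom.equalizer (aeval a : R[X] →ₐ[R] R) (aeval b) × R,
      p = (qc.1 : R[X]) + qc.2 • X := by
  set c := ↑hab.unit⁻¹ * (p.eval a - p.eval b)
  have hc : ∀ (q : AlgHom.equalizer (aeval a : R[X] →ₐ[R] R) (aeval b)) (c' : R),
      p = (q : R[X]) + c' • X → c' = c := by
    rintro ⟨q, hq⟩ c' rfl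
    rw [AlgHom.mem_equalizer, coe_aeval_eq_eval, coe_aeval_eq_eval] at hq
    rw [Units.eq_inv_mul_iff_mul_eq, IsUnit.unit_spec]
    simp only [eval_add, eval_smul, eval_X, smul_eq_mul, hq]
    ring
  have hpc : p - c • X ∈ AlgHom.equalizer (aeval a : R[X] →ₐ[R] R) (aeval b) := by
    have hc : (a - b) * c = p.eval a - p.eval b := by
      rw [← mul_assoc, hab.mul_val_inv, one_mul]
    rw [AlgHom.mem_equalizer, coe_aeval_eq_eval, coe_aeval_eq_eval]
    simp only [eval_sub, eval_smul, eval_X, smul_eq_mul]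
    linear_combination -hc
  refine ⟨(⟨p - c • X, hpc⟩, c), by simp, ?_⟩
  rintro ⟨q, c'⟩ hp
  obtain rfl := hc q c' hp
  ext1
  · ext1; simp [hp]
  · rfl

theorem X_notMem_equalizer_aeval (hab : a ≠ b) :
    X ∉ AlgHom.equalizer (aeval a : R[X] →ₐ[R] R) (aeval b) := by
  simpa [AlgHom.mem_equalizer] using hab

end Polynomial

theorem zhuImage_eq_equalizer :
    zhuImage = AlgHom.equalizer (aeval 0 : ℂ[X] →ₐ[ℂ] ℂ) (aeval (-1)) := by
  have hf : (X - C 0) * (X - C (-1)) = (X ^ 2 + X : ℂ[X]) := by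
    simp only [map_zero, sub_zero, map_neg, map_one, sub_neg_eq_add]
    ring
  have hfX : (X - C 0) * (X - C (-1)) * X =
      C (1 / 2) * ((2 * X ^ 3 + 3 * X ^ 2 + X) - (X ^ 2 + X) : ℂ[X]) := by
    have h2 : C (1 / 2 : ℂ) * 2 = 1 := by rw [← map_ofNat C 2, ← C_mul]; norm_num
    rw [hf]
    linear_combination -(X ^ 3 + X ^ 2) * h2
  apply le_antisymm
  · rw [zhuImage, Algebra.adjoin_le_iff]
    rintro p (rfl | rfl) <;> norm_num
  · refine equalizer_aeval_le (by simp) ?_ ?_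
    · rw [hf]; exact Algebra.subset_adjoin (by simp)
    · rw [hfX]
      exact zhuImage.mul_mem (zhuImage.algebraMap_mem _) (zhuImage.sub_mem
        (Algebra.subset_adjoin (by simp)) (Algebra.subset_adjoin (by simp)))

/-- `ℂ[X]` is the internal direct sum of the subalgebra `A` generated by
`X² + X` and `2X³ + 3X² + X` and the line `ℂ·X`: every polynomial is uniquely an element
of `A` plus a scalar multiple of `X`; in particular `X ∉ A`. -/
theorem stmt12 :
    (∀ p : Polynomial ℂ, ∃! qc : zhuImage × ℂ,
      p = (qc.1 : Polynomial ℂ) + qc.2 • X) ∧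
    (X : Polynomial ℂ) ∉ zhuImage := by
  rw [zhuImage_eq_equalizer]
  exact ⟨existsUnique_add_smul_X (by simp), X_notMem_equalizer_aeval (by simp)⟩
end
end
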